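/- (Lemma 1, part 2) In the secure aggregation with an oblivious server model, assuming only the correctness constraint, H(X_1 | Z_1) ≥ L. -/

import Mathlib

open Classical
open scoped BigOperators

/-- Probability of the event `E` under the probability mass function `p`
on a finite sample space `Ω`. -/
noncomputable def pr {Ω : Type*} [Fintype Ω] (p : Ω → ℝ) (E : Ω → Prop) : ℝ :=
  ∑ ω, if E ω then p ω else 0

/-- Shannon entropy of the random variable `X` in base-`q` units. -/
noncomputable def ent {Ω α : Type*} [Fintype Ω] [Fintype α] (q : ℕ) (p : Ω → ℝ)
    (X : Ω → α) : ℝ :=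
  -∑ a, pr p (fun ω => X ω = a) * Real.logb q (pr p (fun ω => X ω = a))

/-- Conditional entropy `H(X | Y) = H(X, Y) − H(Y)`, base `q`. -/
noncomputable def condEnt {Ω α β : Type*} [Fintype Ω] [Fintype α] [Fintype β]
    (q : ℕ) (p : Ω → ℝ) (X : Ω → α) (Y : Ω → β) : ℝ :=
  ent q p (fun ω => (X ω, Y ω)) - ent q p Y

/-- Mutual information `I(X ; Y) = H(X) + H(Y) − H(X, Y)`, base `q`. -/
noncomputable def mutInf {Ω α β : Type*} [Fintype Ω] [Fintype α] [Fintype β]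
    (q : ℕ) (p : Ω → ℝ) (X : Ω → α) (Y : Ω → β) : ℝ :=
  ent q p X + ent q p Y - ent q p (fun ω => (X ω, Y ω))

/-- Conditional mutual information
`I(X ; Y | Z) = H(X, Z) + H(Y, Z) − H(X, Y, Z) − H(Z)`, base `q`. -/
noncomputable def condMutInf {Ω α β γ : Type*} [Fintype Ω] [Fintype α] [Fintype β] [Fintype γ]
    (q : ℕ) (p : Ω → ℝ) (X : Ω → α) (Y : Ω → β) (Z : Ω → γ) : ℝ :=
  ent q p (fun ω => (X ω, Z ω)) + ent q p (fun ω => (Y ω, Z ω))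
    - ent q p (fun ω => (X ω, Y ω, Z ω)) - ent q p Z

section helpers
variable {Ω α β : Type*} [Fintype Ω] [Fintype α] [Fintype β] {p : Ω → ℝ}

lemma pr_congr {E E' : Ω → Prop} (h : ∀ ω, E ω ↔ E' ω) : pr p E = pr p E' := by
  unfold pr; exact Finset.sum_congr rfl fun ω _ => by simp [h ω]

lemma pr_false : pr p (fun _ => False) = 0 := by simp [pr]

lemma pr_nonneg (hp0 : ∀ ω, 0 ≤ p ω) (E : Ω → Prop) : 0 ≤ pr p E :=
  Finset.sum_nonneg fun ω _ => by split_ifs with h; exacts [hp0 ω, le_rfl]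

lemma pr_mono (hp0 : ∀ ω, 0 ≤ p ω) {E E' : Ω → Prop} (h : ∀ ω, E ω → E' ω) :
    pr p E ≤ pr p E' := by
  refine Finset.sum_le_sum fun ω _ => ?_
  by_cases hE : E ω
  · simp [hE, h ω hE]
  · simp only [if_neg hE]; split_ifs; exact hp0 ω; exact le_refl 0

lemma pr_partition (X : Ω → α) (E : Ω → Prop) :
    pr p E = ∑ a, pr p (fun ω => E ω ∧ X ω = a) := by
  unfold pr
  rw [Finset.sum_comm]
  refine Finset.sum_congr rfl fun ω _ => ?_
  by_cases hE : E ω <;> simp [hE]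

lemma pr_ge_single (hp0 : ∀ ω, 0 ≤ p ω) (E : Ω → Prop) (ω0 : Ω) (h : E ω0) :
    p ω0 ≤ pr p E := by
  unfold pr
  have := Finset.single_le_sum (f := fun ω => if E ω then p ω else 0)
    (fun ω _ => by split_ifs with h'; exacts [hp0 ω, le_rfl]) (Finset.mem_univ ω0)
  simpa [h] using this

lemma pr_pos_elim {E : Ω → Prop} (hp0 : ∀ ω, 0 ≤ p ω) (h : 0 < pr p E) :
    ∃ ω, 0 < p ω ∧ E ω := by
  by_contra hc
  push_neg at hc
  have : pr p E = 0 := by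
    unfold pr
    refine Finset.sum_eq_zero fun ω _ => ?_
    split_ifs with hE
    · by_contra hne
      exact hc ω (lt_of_le_of_ne (hp0 ω) (Ne.symm hne)) hE
    · rfl
  linarith

lemma sum_pr_eq (hp1 : (∑ ω, p ω) = 1) (X : Ω → α) :
    ∑ a, pr p (fun ω => X ω = a) = 1 := by
  unfold pr
  rw [Finset.sum_comm]
  rw [← hp1]
  exact Finset.sum_congr rfl fun ω _ => by simp

lemma ent_congr {q : ℕ} {X X' : Ω → α} (h : ∀ ω, X ω = X' ω) :
    ent q p X = ent q p X' := by
  unfold ent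
  congr 1
  exact Finset.sum_congr rfl fun a _ => by rw [pr_congr (fun ω => by rw [h ω])]

lemma ent_relabel {q : ℕ} (hp0 : ∀ ω, 0 ≤ p ω) (X : Ω → α) (g : α → β)
    (hg : ∀ a a', 0 < pr p (fun ω => X ω = a) → 0 < pr p (fun ω => X ω = a') →
      g a = g a' → a = a') :
    ent q p (fun ω => g (X ω)) = ent q p X := by
  unfold ent
  congr 1
  have hfib : ∀ b, pr p (fun ω => g (X ω) = b)
      = ∑ a, if g a = b then pr p (fun ω => X ω = a) else 0 := by
    intro b
    rw [pr_partition X (fun ω => g (X ω) = b)]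
    refine Finset.sum_congr rfl fun a _ => ?_
    by_cases hb : g a = b
    · rw [if_pos hb, pr_congr (E' := fun ω => X ω = a)]
      intro ω; constructor
      · rintro ⟨-, h2⟩; exact h2
      · intro h2; exact ⟨by rw [h2, hb], h2⟩
    · rw [if_neg hb]
      have : pr p (fun ω => (g (X ω) = b ∧ X ω = a)) = pr p (fun _ => False) := by
        refine pr_congr fun ω => ?_
        constructor
        · rintro ⟨h1, h2⟩; exact hb (by rw [← h2, h1])
        · intro h; exact h.elim
      rw [this]; simp [pr]
  have key : ∀ b, pr p (fun ω => g (X ω) = b) * Real.logb q (pr p (fun ω => g (X ω) = b))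
      = ∑ a, if g a = b then
          pr p (fun ω => X ω = a) * Real.logb q (pr p (fun ω => X ω = a)) else 0 := by
    intro b
    rw [hfib b]
    by_cases hex : ∃ a0, g a0 = b ∧ 0 < pr p (fun ω => X ω = a0)
    · obtain ⟨a0, hb0, hpos0⟩ := hex
      have hz : ∀ a, a ≠ a0 → (if g a = b then pr p (fun ω => X ω = a) else 0) = 0 := by
        intro a hne
        split_ifs with hb
        · by_contra hne0
          have hpos : 0 < pr p (fun ω => X ω = a) :=
            lt_of_le_of_ne (pr_nonneg hp0 _) (Ne.symm hne0)
          exact hne (hg a a0 hpos hpos0 (by rw [hb, hb0]))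
        · rfl
      rw [Finset.sum_eq_single a0 (fun a _ hne => hz a hne) (by simp)]
      rw [Finset.sum_eq_single a0 (fun a _ hne => by
        rcases eq_or_ne (if g a = b then pr p (fun ω => X ω = a) else 0) 0 with h0 | h0
        · split_ifs with hb
          · have := hz a hne; rw [if_pos hb] at this; rw [this]; simp
          · rfl
        · exact absurd (hz a hne) h0) (by simp)]
      rw [if_pos hb0, if_pos hb0]
    · push_neg at hex
      have hz : ∀ a, (if g a = b then pr p (fun ω => X ω = a) else 0) = 0 := by
        intro a
        split_ifs with hb
        · exact le_antisymm (not_lt.mp (by intro h; exact absurd h (by simpa using hex a hb)))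
            (pr_nonneg hp0 _)
        · rfl
      rw [Finset.sum_eq_zero fun a _ => hz a]
      rw [Finset.sum_eq_zero fun a _ => by
        have := hz a; split_ifs with hb
        · rw [if_pos hb] at this; rw [this]; simp
        · rfl]
      simp
  rw [Finset.sum_congr rfl fun b _ => key b, Finset.sum_comm]
  refine Finset.sum_congr rfl fun a _ => ?_
  simp

lemma condEnt_zero_det {q : ℕ} (hq : 1 < q) (hp0 : ∀ ω, 0 ≤ p ω)
    (A : Ω → α) (B : Ω → β)
    (h : ent q p (fun ω => (A ω, B ω)) - ent q p B = 0) :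
    ∀ ω ω', 0 < p ω → 0 < p ω' → B ω = B ω' → A ω = A ω' := by
  have hq1 : (1:ℝ) < (q:ℝ) := by exact_mod_cast hq
  set pab : α → β → ℝ := fun a b => pr p (fun ω => (A ω, B ω) = (a, b)) with hpab
  set pb : β → ℝ := fun b => pr p (fun ω => B ω = b) with hpb
  have hpabnn : ∀ a b, 0 ≤ pab a b := fun a b => pr_nonneg hp0 _
  have hsum : ∀ b, pb b = ∑ a, pab a b := by
    intro b
    show pr p (fun ω => B ω = b) = _
    rw [pr_partition A (fun ω => B ω = b)]
    refine Finset.sum_congr rfl fun a _ => pr_congr fun ω => ?_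
    simp [Prod.ext_iff, and_comm]
  have hle : ∀ a b, pab a b ≤ pb b := fun a b =>
    pr_mono hp0 fun ω hw => by simp_all [Prod.ext_iff]
  have hdiff : ent q p (fun ω => (A ω, B ω)) - ent q p B
      = ∑ b, ∑ a, pab a b * (Real.logb q (pb b) - Real.logb q (pab a b)) := by
    unfold ent
    rw [Fintype.sum_prod_type]
    have hB : ∑ b, pb b * Real.logb q (pb b)
        = ∑ b, ∑ a, pab a b * Real.logb q (pb b) := by
      refine Finset.sum_congr rfl fun b _ => ?_
      rw [hsum b, Finset.sum_mul]
    rw [hB]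
    rw [Finset.sum_comm (f := fun a b => pab a b * Real.logb q (pab a b))]
    rw [neg_sub_neg, ← Finset.sum_sub_distrib]
    refine Finset.sum_congr rfl fun b _ => ?_
    rw [← Finset.sum_sub_distrib]
    refine Finset.sum_congr rfl fun a _ => ?_
    ring
  rw [hdiff] at h
  have hterm : ∀ b, ∀ a, 0 ≤ pab a b * (Real.logb q (pb b) - Real.logb q (pab a b)) := by
    intro b a
    rcases eq_or_lt_of_le (hpabnn a b) with h0 | h0
    · rw [← h0]; simp
    · have : Real.logb q (pab a b) ≤ Real.logb q (pb b) :=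
        Real.logb_le_logb_of_le hq1 h0 (hle a b)
      have := sub_nonneg.mpr this
      positivity
  have hzero : ∀ b a, pab a b * (Real.logb q (pb b) - Real.logb q (pab a b)) = 0 := by
    intro b a
    have h1 : ∀ b ∈ Finset.univ, (0:ℝ) ≤ ∑ a, pab a b * (Real.logb q (pb b) - Real.logb q (pab a b)) :=
      fun b _ => Finset.sum_nonneg fun a _ => hterm b a
    have h2 := (Finset.sum_eq_zero_iff_of_nonneg h1).mp h _ (Finset.mem_univ b)
    have h3 : ∀ a ∈ Finset.univ, (0:ℝ) ≤ pab a b * (Real.logb q (pb b) - Real.logb q (pab a b)) :=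
      fun a _ => hterm b a
    exact (Finset.sum_eq_zero_iff_of_nonneg h3).mp h2 _ (Finset.mem_univ a)
  have heq : ∀ a b, 0 < pab a b → pab a b = pb b := by
    intro a b hpos
    rcases mul_eq_zero.mp (hzero b a) with h0 | h0
    · exact absurd h0 (ne_of_gt hpos)
    · have hlog : Real.logb q (pab a b) = Real.logb q (pb b) := by
        have := sub_eq_zero.mp h0; linarith
      exact Real.logb_injOn_pos hq1 (Set.mem_Ioi.2 hpos)
        (Set.mem_Ioi.2 (lt_of_lt_of_le hpos (hle a b))) hlog
  intro ω ω' hω hω' hB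
  by_contra hA
  set b := B ω
  set a := A ω
  set a' := A ω'
  have hpos : 0 < pab a b := lt_of_lt_of_le hω (pr_ge_single hp0 _ ω rfl)
  have hpos' : 0 < pab a' b :=
    lt_of_lt_of_le hω' (pr_ge_single hp0 _ ω' (by simp [Prod.ext_iff, hB]; rfl))
  have h2 : pab a b + pab a' b ≤ pb b := by
    rw [hsum b]
    calc pab a b + pab a' b = ∑ x ∈ ({a, a'} : Finset α), pab x b := by
          rw [Finset.sum_pair (fun hh => hA hh)]
      _ ≤ ∑ x, pab x b := Finset.sum_le_sum_of_subset_of_nonneg (Finset.subset_univ _)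
          (fun x _ _ => hpabnn x b)
  rw [heq a b hpos, heq a' b hpos'] at h2
  linarith [lt_of_lt_of_le hpos (hle a b)]

end helpers

/-- **Lemma 1, part 2.** Assuming only correctness, `H(X_1 | Z_1) ≥ L`
(user 1 is index `⟨0, _⟩ : Fin K`). -/
theorem lemma1_part2
    (F : Type) [Field F] [Fintype F]
    (K L LX LY : ℕ) (hK : 2 ≤ K) (hL : 1 ≤ L)
    (Ω : Type) [Fintype Ω] (p : Ω → ℝ)
    (hp0 : ∀ ω, 0 ≤ p ω) (hp1 : (∑ ω, p ω) = 1)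
    (ZT : Fin K → Type) [∀ k, Fintype (ZT k)]
    (W : Fin K → Ω → Fin L → F)
    (Z : (k : Fin K) → Ω → ZT k)
    (X : Fin K → Ω → Fin LX → F)
    (Y : Fin K → Ω → Fin LY → F)
    -- inputs i.i.d. uniform on F^L and independent of the keys
    (hWZ : ∀ (w : Fin K → Fin L → F) (z : (k : Fin K) → ZT k),
      pr p (fun ω => (∀ k, W k ω = w k) ∧ (∀ k, Z k ω = z k))
        = (1 / (Fintype.card F : ℝ) ^ L) ^ K * pr p (fun ω => ∀ k, Z k ω = z k))
    -- deterministic encoders X_k = φ_k(W_k, Z_k)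
    (hX : ∀ k, ∃ φ : (Fin L → F) → ZT k → Fin LX → F, ∀ ω, X k ω = φ (W k ω) (Z k ω))
    -- deterministic server maps Y_k = ψ_k(X_1, …, X_K)
    (hY : ∀ k, ∃ ψ : (Fin K → Fin LX → F) → Fin LY → F, ∀ ω, Y k ω = ψ (fun u => X u ω))
    -- correctness: H(Σ_u W_u | Y_k, W_k, Z_k) = 0
    (hCorr : ∀ k, condEnt (Fintype.card F) p (fun ω => ∑ u, W u ω)
        (fun ω => (Y k ω, W k ω, Z k ω)) = 0) :
    (L : ℝ) ≤ condEnt (Fintype.card F) p (X ⟨0, by omega⟩) (Z ⟨0, by omega⟩) := by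
  set q := Fintype.card F with hqdef
  have hq : 1 < q := Fintype.one_lt_card
  have hqR : (1:ℝ) < (q:ℝ) := by exact_mod_cast hq
  have hqpos : (0:ℝ) < (q:ℝ) := by linarith
  set k0 : Fin K := ⟨0, by omega⟩ with hk0
  set k1 : Fin K := ⟨1, by omega⟩ with hk1
  have hk01 : k1 ≠ k0 := by
    simp [hk0, hk1, Fin.ext_iff]
  choose φf hφf using hX
  obtain ⟨ψ, hψ⟩ := hY k1
  set c : ℝ := (1 / (q:ℝ) ^ L) with hc
  have hcpos : 0 < c := by rw [hc]; positivity
  -- determinism from correctness of user k1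
  have hdet : ∀ ω ω', 0 < p ω → 0 < p ω' →
      (Y k1 ω, W k1 ω, Z k1 ω) = (Y k1 ω', W k1 ω', Z k1 ω') →
      (∑ u, W u ω) = (∑ u, W u ω') := by
    have h := hCorr k1
    unfold condEnt at h
    exact condEnt_zero_det hq hp0 (fun ω => ∑ u, W u ω)
      (fun ω => (Y k1 ω, W k1 ω, Z k1 ω)) h
  -- injectivity of the encoder of user k0 on the support of Z k0
  have hinj : ∀ z1 : ZT k0, 0 < pr p (fun ω => Z k0 ω = z1) →
      ∀ w w' : Fin L → F, φf k0 w z1 = φf k0 w' z1 → w = w' := by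
    intro z1 hz1 w w' hφeq
    by_contra hne
    -- find a full key tuple z with positive probability extending z1
    rw [pr_partition (fun ω => (fun k => Z k ω)) (fun ω => Z k0 ω = z1)] at hz1
    obtain ⟨z, hz⟩ : ∃ z : (k : Fin K) → ZT k,
        0 < pr p (fun ω => Z k0 ω = z1 ∧ (fun k => Z k ω) = z) := by
      by_contra hcon
      push_neg at hcon
      have : ∑ z : (k : Fin K) → ZT k,
          pr p (fun ω => Z k0 ω = z1 ∧ (fun k => Z k ω) = z) ≤ 0 :=
        Finset.sum_nonpos fun z _ => hcon z
      linarith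
    obtain ⟨ω0, hω0p, hω0e⟩ := pr_pos_elim hp0 hz
    have hzk0 : z k0 = z1 := by
      rw [← congrFun hω0e.2 k0, hω0e.1]
    have hzpos : 0 < pr p (fun ω => ∀ k, Z k ω = z k) := by
      refine lt_of_lt_of_le hz (pr_mono hp0 fun ω hw => ?_)
      intro k; rw [← hw.2]
    -- two positive-probability atoms differing only in W k0
    set wv : Fin K → Fin L → F := fun k => if k = k0 then w else 0 with hwv
    set wv' : Fin K → Fin L → F := fun k => if k = k0 then w' else 0 with hwv'
    have hA : 0 < pr p (fun ω => (∀ k, W k ω = wv k) ∧ (∀ k, Z k ω = z k)) := by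
      rw [hWZ wv z]; exact mul_pos (pow_pos hcpos K) hzpos
    have hA' : 0 < pr p (fun ω => (∀ k, W k ω = wv' k) ∧ (∀ k, Z k ω = z k)) := by
      rw [hWZ wv' z]; exact mul_pos (pow_pos hcpos K) hzpos
    obtain ⟨ω, hωp, hωW, hωZ⟩ := pr_pos_elim hp0 hA
    obtain ⟨ω', hω'p, hω'W, hω'Z⟩ := pr_pos_elim hp0 hA'
    -- all encoder outputs coincide
    have hXeq : ∀ u, X u ω = X u ω' := by
      intro u
      rw [hφf u ω, hφf u ω', hωW u, hω'W u, hωZ u, hω'Z u]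
      by_cases hu : u = k0
      · subst hu
        simp only [hwv, hwv', if_pos rfl]
        rw [hzk0, hφeq]
      · simp only [hwv, hwv', if_neg hu]
    have hYeq : Y k1 ω = Y k1 ω' := by
      rw [hψ ω, hψ ω']
      have : (fun u => X u ω) = (fun u => X u ω') := funext hXeq
      rw [this]
    have hBeq : (Y k1 ω, W k1 ω, Z k1 ω) = (Y k1 ω', W k1 ω', Z k1 ω') := by
      rw [hYeq, hωW k1, hω'W k1, hωZ k1, hω'Z k1]
      simp only [hwv, hwv', if_neg hk01]
    have hsum := hdet ω ω' hωp hω'p hBeq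
    have hsumω : (∑ u, W u ω) = w := by
      calc (∑ u, W u ω) = ∑ u, wv u := Finset.sum_congr rfl fun u _ => hωW u
        _ = w := by rw [hwv]; simp
    have hsumω' : (∑ u, W u ω') = w' := by
      calc (∑ u, W u ω') = ∑ u, wv' u := Finset.sum_congr rfl fun u _ => hω'W u
        _ = w' := by rw [hwv']; simp
    exact hne (by rw [← hsumω, hsum, hsumω'])
  -- marginal: pr(W k0 = w, Z k0 = z1) = c * pr(Z k0 = z1)
  have hmarg : ∀ (w : Fin L → F) (z1 : ZT k0),
      pr p (fun ω => (W k0 ω, Z k0 ω) = (w, z1)) = c * pr p (fun ω => Z k0 ω = z1) := by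
    intro w z1
    set m : (Fin L → F) → ℝ := fun w => pr p (fun ω => W k0 ω = w ∧ Z k0 ω = z1) with hm
    have hdecomp : ∀ w0, m w0 = ∑ vz : (Fin K → Fin L → F) × ((k : Fin K) → ZT k),
        (if vz.1 k0 = w0 ∧ vz.2 k0 = z1 then
          c ^ K * pr p (fun ω => ∀ k, Z k ω = vz.2 k) else 0) := by
      intro w0
      show pr p (fun ω => W k0 ω = w0 ∧ Z k0 ω = z1) = _
      rw [pr_partition (fun ω => ((fun k => W k ω), (fun k => Z k ω))) _]
      refine Finset.sum_congr rfl fun vz _ => ?_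
      by_cases hvz : vz.1 k0 = w0 ∧ vz.2 k0 = z1
      · rw [if_pos hvz]
        rw [pr_congr (E' := fun ω => (∀ k, W k ω = vz.1 k) ∧ (∀ k, Z k ω = vz.2 k))]
        · rw [hWZ vz.1 vz.2]
        · intro ω
          constructor
          · rintro ⟨⟨h1, h2⟩, h3⟩
            have h4 : (fun k => W k ω) = vz.1 := congrArg Prod.fst h3
            have h5 : (fun k => Z k ω) = vz.2 := congrArg Prod.snd h3
            exact ⟨fun k => congrFun h4 k, fun k => congrFun h5 k⟩
          · rintro ⟨h1, h2⟩
            refine ⟨⟨?_, ?_⟩, ?_⟩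
            · rw [h1 k0, hvz.1]
            · rw [h2 k0, hvz.2]
            · exact Prod.ext (funext h1) (funext h2)
      · rw [if_neg hvz]
        rw [pr_congr (E' := fun _ => False), pr_false]
        intro ω
        simp only [iff_false]
        rintro ⟨⟨h1, h2⟩, h3⟩
        have h4 : (fun k => W k ω) = vz.1 := congrArg Prod.fst h3
        have h5 : (fun k => Z k ω) = vz.2 := congrArg Prod.snd h3
        exact hvz ⟨by rw [← congrFun h4 k0, h1], by rw [← congrFun h5 k0, h2]⟩
    -- m is constant in w
    have hconst : ∀ w0, m w0 = m w := by
      intro w0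
      rw [hdecomp w0, hdecomp w]
      set d : Fin K → Fin L → F := fun k => if k = k0 then w - w0 else 0 with hd
      refine Fintype.sum_equiv ((Equiv.addRight d).prodCongr (Equiv.refl _)) _ _ ?_
      intro vz
      simp only [Equiv.prodCongr_apply, Equiv.coe_addRight, Equiv.refl_apply, Prod.map]
      congr 1
      have : (vz.1 + d) k0 = vz.1 k0 + (w - w0) := by
        simp [hd]
      rw [this]
      apply propext
      constructor
      · rintro ⟨h1, h2⟩
        exact ⟨by rw [h1]; abel, h2⟩
      · rintro ⟨h1, h2⟩
        refine ⟨?_, h2⟩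
        have h3 : vz.1 k0 + (w - w0) - (w - w0) = w - (w - w0) := by rw [h1]
        have h4 : vz.1 k0 + (w - w0) - (w - w0) = vz.1 k0 := by abel
        have h5 : w - (w - w0) = w0 := by abel
        rw [← h4, h3, h5]
    -- summing over w gives the marginal of Z k0
    have hsplit : pr p (fun ω => Z k0 ω = z1) = ∑ w0, m w0 := by
      rw [pr_partition (fun ω => W k0 ω) (fun ω => Z k0 ω = z1)]
      exact Finset.sum_congr rfl fun w0 _ => pr_congr fun ω => and_comm
    have hcard : (Fintype.card (Fin L → F) : ℝ) = (q:ℝ) ^ L := by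
      rw [Fintype.card_fun]
      push_cast [hqdef]
      simp
    have hsum2 : pr p (fun ω => Z k0 ω = z1) = (q:ℝ) ^ L * m w := by
      rw [hsplit, Finset.sum_congr rfl fun w0 _ => hconst w0, Finset.sum_const,
        nsmul_eq_mul, ← hcard]
      simp
    have : m w = c * pr p (fun ω => Z k0 ω = z1) := by
      rw [hsum2, hc]
      field_simp
    rw [← this, hm]
    exact pr_congr fun ω => by simp [Prod.ext_iff]
  -- entropy of the pair (W k0, Z k0)
  have hentW : ent q p (fun ω => (W k0 ω, Z k0 ω)) = (L:ℝ) + ent q p (Z k0) := by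
    have hcard : (((Finset.univ : Finset (Fin L → F))).card : ℝ) = (q:ℝ) ^ L := by
      rw [Finset.card_univ, Fintype.card_fun]
      push_cast [hqdef]
      simp
    have hlogc : Real.logb q c = -(L:ℝ) := by
      rw [hc, one_div, Real.logb_inv, Real.logb_pow, Real.logb_self_eq_one hqR]
      simp
    set S1 : ℝ := ∑ z1, pr p (fun ω => Z k0 ω = z1)
        * Real.logb q (pr p (fun ω => Z k0 ω = z1)) with hS1
    have hts : ∑ z1, pr p (fun ω => Z k0 ω = z1) = 1 := sum_pr_eq hp1 (Z k0)
    have hper : ∀ z1 : ZT k0, c * (pr p (fun ω => Z k0 ω = z1)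
          * Real.logb q (c * pr p (fun ω => Z k0 ω = z1)))
        = c * (pr p (fun ω => Z k0 ω = z1) * Real.logb q (pr p (fun ω => Z k0 ω = z1))
            - (L:ℝ) * pr p (fun ω => Z k0 ω = z1)) := by
      intro z1
      rcases eq_or_lt_of_le (pr_nonneg hp0 (fun ω => Z k0 ω = z1)) with h0 | h0
      · rw [← h0]; simp
      · rw [Real.logb_mul (ne_of_gt hcpos) (ne_of_gt h0), hlogc]
        ring
    have claimA : ∑ a : (Fin L → F) × ZT k0,
          pr p (fun ω => (W k0 ω, Z k0 ω) = a)
            * Real.logb q (pr p (fun ω => (W k0 ω, Z k0 ω) = a))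
        = (q:ℝ) ^ L * ∑ z1, c * (pr p (fun ω => Z k0 ω = z1)
            * Real.logb q (c * pr p (fun ω => Z k0 ω = z1))) := by
      have step1 : ∑ a : (Fin L → F) × ZT k0,
            pr p (fun ω => (W k0 ω, Z k0 ω) = a)
              * Real.logb q (pr p (fun ω => (W k0 ω, Z k0 ω) = a))
          = ∑ a : (Fin L → F) × ZT k0, c * pr p (fun ω => Z k0 ω = a.2)
              * Real.logb q (c * pr p (fun ω => Z k0 ω = a.2)) := by
        refine Finset.sum_congr rfl fun a _ => ?_
        obtain ⟨w1, z2⟩ := a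
        rw [hmarg w1 z2]
      rw [step1]
      rw [show (∑ a : (Fin L → F) × ZT k0, c * pr p (fun ω => Z k0 ω = a.2)
            * Real.logb q (c * pr p (fun ω => Z k0 ω = a.2)))
          = ∑ w : Fin L → F, ∑ z1 : ZT k0, c * pr p (fun ω => Z k0 ω = z1)
            * Real.logb q (c * pr p (fun ω => Z k0 ω = z1)) from Fintype.sum_prod_type _]
      rw [Finset.sum_const, nsmul_eq_mul, hcard]
      congr 1
      exact Finset.sum_congr rfl fun z1 _ => by ring
    have claimB : ∑ z1, c * (pr p (fun ω => Z k0 ω = z1)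
          * Real.logb q (c * pr p (fun ω => Z k0 ω = z1)))
        = c * (S1 - (L:ℝ)) := by
      rw [Finset.sum_congr rfl fun z1 _ => hper z1]
      rw [← Finset.mul_sum, Finset.sum_sub_distrib, ← Finset.mul_sum, hts, hS1]
      ring
    have hcl : (q:ℝ) ^ L * c = 1 := by
      rw [hc]; field_simp
    show -∑ a : (Fin L → F) × ZT k0, _ = _
    rw [show (∑ a : (Fin L → F) × ZT k0,
          pr p (fun ω => (W k0 ω, Z k0 ω) = a)
            * Real.logb q (pr p (fun ω => (W k0 ω, Z k0 ω) = a)))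
        = (q:ℝ) ^ L * (c * (S1 - (L:ℝ))) from by rw [claimA, claimB]]
    rw [show (q:ℝ) ^ L * (c * (S1 - (L:ℝ))) = ((q:ℝ) ^ L * c) * (S1 - (L:ℝ)) from by ring,
      hcl, one_mul]
    show _ = (L:ℝ) + -S1
    ring
  -- relabel: (X k0, Z k0) is an injective function of (W k0, Z k0) on the support
  have hentX : ent q p (fun ω => (X k0 ω, Z k0 ω)) = ent q p (fun ω => (W k0 ω, Z k0 ω)) := by
    have := ent_relabel (q := q) hp0 (fun ω => (W k0 ω, Z k0 ω))
      (fun a => (φf k0 a.1 a.2, a.2)) ?_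
    · rw [← this]
      exact ent_congr fun ω => by rw [hφf k0 ω]
    · rintro ⟨w, z1⟩ ⟨w', z1'⟩ h1 h2 hg
      have hz : z1 = z1' := congrArg Prod.snd hg
      subst hz
      have hφeq : φf k0 w z1 = φf k0 w' z1 := congrArg Prod.fst hg
      have ht1 : 0 < pr p (fun ω => Z k0 ω = z1) := by
        have hh := h1
        rw [hmarg w z1] at hh
        have hx := pr_nonneg hp0 (fun ω => Z k0 ω = z1)
        nlinarith
      rw [hinj z1 ht1 w w' hφeq]
  -- conclude
  show (L:ℝ) ≤ condEnt q p (X k0) (Z k0)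
  unfold condEnt
  rw [hentX, hentW]
  simp
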